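/- Let r : X × Z^n → ℝ be measurable with |r(x, z_{1:n})| ≤ R for all (x, z_{1:n}), where R ≥ 0. Then the difference between the expected terminal reward under the original and simplified observation models is bounded by R times the sum of expected stepwise discrepancies under the simplified model: |E_{p_Z}^{(n)}[r] − E_{q_Z}^{(n)}[r]| ≤ R · ∑_{l=1}^n D_l. -/

import Mathlib

open MeasureTheory

noncomputable section

/-- The state-dependent total-variation discrepancy
`Δ(x) = ∫ |p_Z(x,z) − q_Z(x,z)| dμ_Z(z)` between two conditional observation
densities. -/
def TVdisc {X Z : Type*} [MeasurableSpace Z] (μZ : Measure Z)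
    (pZ qZ : X → Z → ℝ) (x : X) : ℝ :=
  ∫ z, |pZ x z - qZ x z| ∂μZ

/-- `Eexp μX μZ b τ ρ i hi f` is the expectation
`E_ρ^{(i)}[f] = ∫_{Z^i} ∫_{X^{i+1}} b(x₀) ∏_{j=1}^i τ_j(x_{j-1}, z_{1:j-1}, x_j)
∏_{j=1}^i ρ(x_j, z_j) · f(x_i, z_{1:i})`. -/
def Eexp {X Z : Type*} [MeasurableSpace X] [MeasurableSpace Z]
    (μX : Measure X) (μZ : Measure Z) {n : ℕ}
    (b : X → ℝ) (τ : (j : Fin n) → X → (Fin j.val → Z) → X → ℝ)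
    (ρ : X → Z → ℝ) (i : ℕ) (hi : i ≤ n)
    (f : X → (Fin i → Z) → ℝ) : ℝ :=
  ∫ z : Fin i → Z,
    ∫ x : Fin (i + 1) → X,
      b (x 0) *
        (∏ j : Fin i,
          τ (j.castLE hi) (x j.castSucc) (fun k => z (k.castLE j.isLt.le))
            (x j.succ)) *
        (∏ j : Fin i, ρ (x j.succ) (z j)) *
        f (x (Fin.last i)) z
      ∂(Measure.pi fun _ => μX)
    ∂(Measure.pi fun _ => μZ)

/-- `Dstep μX μZ b τ pZ qZ l` is the expected stepwise discrepancy
`D_{l+1} = ∫_{Z^l} ∫_{X^{l+2}} b(x₀) ∏_{j=1}^{l+1} τ_j ∏_{k=1}^{l} q_Z(x_k,z_k) ·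
Δ(x_{l+1})` (the paper's `D_l` for the 1-based step `l = l.val + 1`). -/
def Dstep {X Z : Type*} [MeasurableSpace X] [MeasurableSpace Z]
    (μX : Measure X) (μZ : Measure Z) {n : ℕ}
    (b : X → ℝ) (τ : (j : Fin n) → X → (Fin j.val → Z) → X → ℝ)
    (pZ qZ : X → Z → ℝ) (l : Fin n) : ℝ :=
  ∫ z : Fin l.val → Z,
    ∫ x : Fin (l.val + 2) → X,
      b (x 0) *
        (∏ j : Fin (l.val + 1),
          τ (j.castLE l.isLt) (x j.castSucc)
            (fun k => z (k.castLE (Nat.lt_succ_iff.mp j.isLt))) (x j.succ)) *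
        (∏ k : Fin l.val, qZ (x k.succ.castSucc) (z k)) *
        TVdisc μZ pZ qZ (x (Fin.last (l.val + 1)))
      ∂(Measure.pi fun _ => μX)
    ∂(Measure.pi fun _ => μZ)

/-!
Let `W_k` be the joint density of a state/observation path whose first `k` observations are
drawn from `q_Z` and the remaining ones from `p_Z`, so that `E_p[r] = ∫ W_0 r` and
`E_q[r] = ∫ W_n r`. Telescoping, `E_p[r] - E_q[r] = ∑_l ∫ (W_l - W_{l+1}) r`. The densities
`W_l` and `W_{l+1}` differ only in the observation factor of step `l + 1`, so `|W_l - W_{l+1}|`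
is the path density carrying `|p_Z - q_Z|` at that step. Integrating out the later steps, whose
transition and observation densities all have mass one, and then the observation of step
`l + 1` leaves exactly `D_{l+1}`; hence each term is at most `R * D_{l+1}`.
-/

open ENNReal Function

section FinTuple

lemma Fin.snoc_castLE_of_le {α : Type*} {m k : ℕ} (z : Fin m → α) (a : α) (i : Fin k)
    {h : k ≤ m + 1} (h' : k ≤ m) :
    Fin.snoc (α := fun _ => α) z a (i.castLE h) = z (i.castLE h') :=
  Fin.snoc_castSucc (α := fun _ => α) _ _ (i.castLE h')

variable {α : Type*} [MeasurableSpace α]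

@[fun_prop]
lemma Measurable.fin_snoc {β : Type*} [MeasurableSpace β] {m : ℕ} {f : β → Fin m → α}
    {g : β → α} (hf : Measurable f) (hg : Measurable g) :
    Measurable fun c => (Fin.snoc (f c) (g c) : Fin (m + 1) → α) := by
  refine measurable_pi_lambda _ fun i => ?_
  induction i using Fin.lastCases with
  | last => simpa only [Fin.snoc_last] using hg
  | cast j =>
    simp only [Fin.snoc_castSucc]
    exact (measurable_pi_apply j).comp hf

variable (μ : Measure α)

lemma lintegral_pi_fin_succ [SigmaFinite μ] {m : ℕ} {F : (Fin (m + 1) → α) → ℝ≥0∞}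
    (hF : Measurable F) :
    ∫⁻ y, F y ∂(Measure.pi fun _ => μ) =
      ∫⁻ x : Fin m → α, ∫⁻ a, F (Fin.snoc x a) ∂μ ∂(Measure.pi fun _ => μ) := by
  set e := MeasurableEquiv.piFinSuccAbove (fun _ : Fin (m + 1) => α) (Fin.last m)
  have he := (measurePreserving_piFinSuccAbove (fun _ : Fin (m + 1) => μ) (Fin.last m)).symm
  rw [← he.lintegral_comp_emb e.symm.measurableEmbedding,
    lintegral_prod_symm' (fun p => F (e.symm p)) (hF.comp e.symm.measurable)]
  simp only [e, MeasurableEquiv.piFinSuccAbove_symm_apply, Fin.insertNthEquiv_last]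
  rfl

lemma lintegral_pi_fin_zero (F : (Fin 0 → α) → ℝ≥0∞) :
    ∫⁻ y, F y ∂(Measure.pi fun _ => μ) = F finZeroElim := by
  rw [Measure.pi_of_empty, lintegral_dirac' _ (measurable_of_finite F)]
  exact congrArg F (Subsingleton.elim _ _)

end FinTuple

lemma lintegral_ofReal_eq_one {α : Type*} [MeasurableSpace α] {μ : Measure α} {f : α → ℝ}
    (hf0 : ∀ x, 0 ≤ f x) (hf : ∫ x, f x ∂μ = 1) : ∫⁻ x, ENNReal.ofReal (f x) ∂μ = 1 := by
  rw [← ofReal_integral_eq_lintegral_ofReal (integrable_of_integral_eq_one hf) (ae_of_all _ hf0),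
    hf, ENNReal.ofReal_one]

section PathWeight

variable {X Z : Type*} {n : ℕ}

def pathWeight (b : X → ℝ) (τ : (j : Fin n) → X → (Fin j.val → Z) → X → ℝ)
    (w : ℕ → X → Z → ℝ) (m : ℕ) (hm : m ≤ n) (z : Fin m → Z) (x : Fin (m + 1) → X) : ℝ :=
  b (x 0) *
    (∏ j : Fin m,
      τ (j.castLE hm) (x j.castSucc) (fun k => z (k.castLE j.isLt.le)) (x j.succ)) *
    ∏ j : Fin m, w j (x j.succ) (z j)

variable {b : X → ℝ} {τ : (j : Fin n) → X → (Fin j.val → Z) → X → ℝ} {w : ℕ → X → Z → ℝ}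

lemma pathWeight_nonneg (hb0 : ∀ x, 0 ≤ b x) (hτ0 : ∀ j x h x', 0 ≤ τ j x h x')
    (hw0 : ∀ j x z, 0 ≤ w j x z) (m : ℕ) (hm : m ≤ n) (z : Fin m → Z) (x : Fin (m + 1) → X) :
    0 ≤ pathWeight b τ w m hm z x := by
  unfold pathWeight
  exact mul_nonneg (mul_nonneg (hb0 _) (Finset.prod_nonneg fun _ _ => hτ0 _ _ _ _))
    (Finset.prod_nonneg fun _ _ => hw0 _ _ _)

lemma pathWeight_congr {w' : ℕ → X → Z → ℝ} {m : ℕ} (hm : m ≤ n) (h : ∀ j < m, w j = w' j) :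
    pathWeight b τ w m hm = pathWeight b τ w' m hm := by
  ext z x
  simp only [pathWeight]
  congr 1
  exact Finset.prod_congr rfl fun j _ => by rw [h j j.isLt]

lemma pathWeight_snoc {m : ℕ} (hm : m + 1 ≤ n) (z : Fin m → Z) (zl : Z)
    (x : Fin (m + 1) → X) (xl : X) :
    pathWeight b τ w (m + 1) hm (Fin.snoc z zl) (Fin.snoc x xl) =
      pathWeight b τ w m (Nat.le_of_succ_le hm) z x * τ ⟨m, hm⟩ (x (Fin.last m)) z xl *
        w m xl zl := by
  simp (disch := simp) only [pathWeight, Fin.prod_univ_castSucc, Fin.snoc_castSucc,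
    Fin.succ_castSucc, Fin.snoc_last, Fin.succ_last, Fin.snoc_apply_zero, Fin.snoc_castLE_of_le]
  conv_rhs => rw [mul_right_comm _ (∏ j : Fin m, w j (x j.succ) (z j)),
    mul_assoc _ _ (w m xl zl), mul_assoc (b (x 0))]
  rfl

variable [MeasurableSpace X] [MeasurableSpace Z]

lemma measurable_pathWeight (hb : Measurable b)
    (hτ : ∀ j, Measurable fun t : X × (Fin j.val → Z) × X => τ j t.1 t.2.1 t.2.2)
    (hw : ∀ j, Measurable (uncurry (w j))) (m : ℕ) (hm : m ≤ n) :
    Measurable fun y : (Fin m → Z) × (Fin (m + 1) → X) => pathWeight b τ w m hm y.1 y.2 := by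
  refine Measurable.mul (Measurable.mul ?_ (Finset.measurable_prod _ fun j _ => ?_))
    (Finset.measurable_prod _ fun j _ => ?_)
  · exact hb.comp ((measurable_pi_apply 0).comp measurable_snd)
  · exact (hτ (j.castLE hm)).comp (f := fun y : (Fin m → Z) × (Fin (m + 1) → X) =>
      (y.2 j.castSucc, fun k : Fin j => y.1 (k.castLE j.isLt.le), y.2 j.succ)) (by fun_prop)
  · exact (hw j).comp (f := fun y : (Fin m → Z) × (Fin (m + 1) → X) => (y.2 j.succ, y.1 j))
      (by fun_prop)

variable (μX : Measure X) (μZ : Measure Z)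

-- Masses live in `ℝ≥0∞`, where Tonelli needs no integrability side conditions.
def pathMass (b : X → ℝ) (τ : (j : Fin n) → X → (Fin j.val → Z) → X → ℝ)
    (w : ℕ → X → Z → ℝ) (m : ℕ) (hm : m ≤ n) : ℝ≥0∞ :=
  ∫⁻ z, ∫⁻ x, ENNReal.ofReal (pathWeight b τ w m hm z x)
    ∂(Measure.pi fun _ => μX) ∂(Measure.pi fun _ => μZ)

lemma pathMass_zero (hb0 : ∀ x, 0 ≤ b x) (hbn : ∫ x, b x ∂μX = 1) :
    pathMass μX μZ b τ w 0 n.zero_le = 1 := by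
  have he := measurePreserving_funUnique μX (Fin 1)
  rw [pathMass, lintegral_pi_fin_zero]
  simp only [pathWeight, Finset.univ_eq_empty, Finset.prod_empty, mul_one]
  rw [← lintegral_ofReal_eq_one hb0 hbn,
    ← he.lintegral_comp_emb (MeasurableEquiv.measurableEmbedding _)]
  rfl

variable [SigmaFinite μX] [SigmaFinite μZ]

lemma pathMass_succ (hb : Measurable b) (hb0 : ∀ x, 0 ≤ b x)
    (hτ : ∀ j, Measurable fun t : X × (Fin j.val → Z) × X => τ j t.1 t.2.1 t.2.2)
    (hτ0 : ∀ j x h x', 0 ≤ τ j x h x') (hτn : ∀ j x h, ∫ x', τ j x h x' ∂μX = 1)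
    (hw : ∀ j, Measurable (uncurry (w j))) (hw0 : ∀ j x z, 0 ≤ w j x z)
    {m : ℕ} (hm : m + 1 ≤ n) (hwn : ∀ x, ∫ z, w m x z ∂μZ = 1) :
    pathMass μX μZ b τ w (m + 1) hm = pathMass μX μZ b τ w m (Nat.le_of_succ_le hm) := by
  set F := fun y : (Fin (m + 1) → Z) × (Fin (m + 2) → X) =>
    ENNReal.ofReal (pathWeight b τ w (m + 1) hm y.1 y.2)
  have hF : Measurable F := ENNReal.measurable_ofReal.comp (measurable_pathWeight hb hτ hw _ hm)
  have hlast : ∀ z x, ∫⁻ xl, ∫⁻ zl, F (Fin.snoc z zl, Fin.snoc x xl) ∂μZ ∂μX =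
      ENNReal.ofReal (pathWeight b τ w m (Nat.le_of_succ_le hm) z x) := by
    intro z x
    have hW0 := pathWeight_nonneg hb0 hτ0 hw0 m (Nat.le_of_succ_le hm) z x
    have hsnoc : ∀ xl zl, F (Fin.snoc z zl, Fin.snoc x xl) =
        ENNReal.ofReal (pathWeight b τ w m (Nat.le_of_succ_le hm) z x) *
          ENNReal.ofReal (τ ⟨m, hm⟩ (x (Fin.last m)) z xl) * ENNReal.ofReal (w m xl zl) := by
      intro xl zl
      simp only [F]
      rw [pathWeight_snoc, ENNReal.ofReal_mul (mul_nonneg hW0 (hτ0 _ _ _ _)),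
        ENNReal.ofReal_mul hW0]
    simp only [hsnoc, lintegral_const_mul' _ _ ENNReal.ofReal_ne_top,
      lintegral_const_mul' _ _ (ENNReal.mul_ne_top ENNReal.ofReal_ne_top ENNReal.ofReal_ne_top),
      lintegral_ofReal_eq_one (hw0 m _) (hwn _), mul_one,
      lintegral_ofReal_eq_one (hτ0 _ _ _) (hτn _ _ _)]
  calc pathMass μX μZ b τ w (m + 1) hm
      = ∫⁻ z, ∫⁻ zl, ∫⁻ x, ∫⁻ xl, F (Fin.snoc z zl, Fin.snoc x xl)
          ∂μX ∂(Measure.pi fun _ => μX) ∂μZ ∂(Measure.pi fun _ => μZ) := by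
        rw [pathMass, lintegral_pi_fin_succ μZ hF.lintegral_prod_right']
        exact lintegral_congr fun z => lintegral_congr fun zl =>
          lintegral_pi_fin_succ μX (by fun_prop)
    _ = ∫⁻ z, ∫⁻ x, ∫⁻ xl, ∫⁻ zl, F (Fin.snoc z zl, Fin.snoc x xl)
          ∂μZ ∂μX ∂(Measure.pi fun _ => μX) ∂(Measure.pi fun _ => μZ) := by
        refine lintegral_congr fun z => ?_
        rw [lintegral_lintegral_swap (by fun_prop)]
        exact lintegral_congr fun x => lintegral_lintegral_swap (by fun_prop)
    _ = pathMass μX μZ b τ w m (Nat.le_of_succ_le hm) := by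
        simp only [hlast, pathMass]

lemma pathMass_eq_of_le (hb : Measurable b) (hb0 : ∀ x, 0 ≤ b x)
    (hτ : ∀ j, Measurable fun t : X × (Fin j.val → Z) × X => τ j t.1 t.2.1 t.2.2)
    (hτ0 : ∀ j x h x', 0 ≤ τ j x h x') (hτn : ∀ j x h, ∫ x', τ j x h x' ∂μX = 1)
    (hw : ∀ j, Measurable (uncurry (w j))) (hw0 : ∀ j x z, 0 ≤ w j x z)
    {k m : ℕ} (hkm : k ≤ m) (hm : m ≤ n) (hwn : ∀ j, k ≤ j → j < m → ∀ x, ∫ z, w j x z ∂μZ = 1) :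
    pathMass μX μZ b τ w m hm = pathMass μX μZ b τ w k (hkm.trans hm) := by
  induction m, hkm using Nat.le_induction with
  | base => rfl
  | succ m hkm ih =>
    rw [pathMass_succ μX μZ hb hb0 hτ hτ0 hτn hw hw0 hm (hwn m hkm m.lt_succ_self)]
    exact ih _ fun j hkj hjm => hwn j hkj (hjm.trans m.lt_succ_self)

lemma pathMass_eq_one (hb : Measurable b) (hb0 : ∀ x, 0 ≤ b x) (hbn : ∫ x, b x ∂μX = 1)
    (hτ : ∀ j, Measurable fun t : X × (Fin j.val → Z) × X => τ j t.1 t.2.1 t.2.2)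
    (hτ0 : ∀ j x h x', 0 ≤ τ j x h x') (hτn : ∀ j x h, ∫ x', τ j x h x' ∂μX = 1)
    (hw : ∀ j, Measurable (uncurry (w j))) (hw0 : ∀ j x z, 0 ≤ w j x z)
    (hwn : ∀ j x, ∫ z, w j x z ∂μZ = 1) {m : ℕ} (hm : m ≤ n) :
    pathMass μX μZ b τ w m hm = 1 := by
  rw [pathMass_eq_of_le μX μZ hb hb0 hτ hτ0 hτn hw hw0 m.zero_le hm fun j _ _ => hwn j,
    pathMass_zero μX μZ hb0 hbn]

end PathWeight

section ProdIntegral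

variable {α β : Type*} [MeasurableSpace α] [MeasurableSpace β] {μ : Measure α} {ν : Measure β}
  [SFinite ν] {f : α → β → ℝ}

lemma integral_prod_eq_toReal_lintegral_lintegral (hf : Measurable (uncurry f))
    (hf0 : ∀ a b, 0 ≤ f a b) :
    ∫ p, f p.1 p.2 ∂μ.prod ν = (∫⁻ a, ∫⁻ b, ENNReal.ofReal (f a b) ∂ν ∂μ).toReal := by
  rw [integral_eq_lintegral_of_nonneg_ae (f := fun p : α × β => f p.1 p.2)
      (ae_of_all _ fun p => hf0 p.1 p.2) hf.aestronglyMeasurable,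
    lintegral_prod (fun p => ENNReal.ofReal (f p.1 p.2)) hf.ennreal_ofReal.aemeasurable]

lemma integrable_prod_iff_lintegral_lintegral_ne_top (hf : Measurable (uncurry f))
    (hf0 : ∀ a b, 0 ≤ f a b) :
    Integrable (uncurry f) (μ.prod ν) ↔ ∫⁻ a, ∫⁻ b, ENNReal.ofReal (f a b) ∂ν ∂μ ≠ ⊤ := by
  rw [← lintegral_prod (fun p => ENNReal.ofReal (f p.1 p.2)) hf.ennreal_ofReal.aemeasurable,
    ← lt_top_iff_ne_top, ← hasFiniteIntegral_iff_ofReal (f := fun p : α × β => f p.1 p.2)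
      (ae_of_all _ fun p => hf0 p.1 p.2)]
  exact ⟨fun h => h.2, fun h => ⟨hf.aestronglyMeasurable, h⟩⟩

lemma integral_integral_eq_toReal_lintegral_lintegral [SFinite μ] (hf : Measurable (uncurry f))
    (hf0 : ∀ a b, 0 ≤ f a b) (hfin : ∫⁻ a, ∫⁻ b, ENNReal.ofReal (f a b) ∂ν ∂μ ≠ ⊤) :
    ∫ a, ∫ b, f a b ∂ν ∂μ = (∫⁻ a, ∫⁻ b, ENNReal.ofReal (f a b) ∂ν ∂μ).toReal := by
  rw [integral_integral ((integrable_prod_iff_lintegral_lintegral_ne_top hf hf0).2 hfin),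
    integral_prod_eq_toReal_lintegral_lintegral hf hf0]

end ProdIntegral

lemma abs_integral_mul_sub_integral_mul_le {α : Type*} [MeasurableSpace α] {μ : Measure α}
    {f g h : α → ℝ} {R : ℝ} (hf : Integrable f μ) (hg : Integrable g μ)
    (hh : AEStronglyMeasurable h μ) (hhR : ∀ x, |h x| ≤ R) :
    |∫ x, f x * h x ∂μ - ∫ x, g x * h x ∂μ| ≤ R * ∫ x, |f x - g x| ∂μ := by
  have hbdd : ∀ᵐ x ∂μ, ‖h x‖ ≤ R := ae_of_all _ hhR
  have hfh := hf.mul_bdd hh hbdd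
  have hgh := hg.mul_bdd hh hbdd
  rw [← integral_sub hfh hgh, ← integral_const_mul]
  refine abs_integral_le_integral_abs.trans (integral_mono (hfh.sub hgh).abs
    ((hf.sub hg).abs.const_mul R) fun x => ?_)
  calc |f x * h x - g x * h x| = |f x - g x| * |h x| := by rw [← sub_mul, abs_mul]
    _ ≤ R * |f x - g x| := by
      rw [mul_comm]
      exact mul_le_mul_of_nonneg_right (hhR x) (abs_nonneg _)

lemma Finset.prod_sub_prod_eq_mul_prod_erase {ι R : Type*} [CommRing R] [DecidableEq ι]
    {s : Finset ι} {f g : ι → R} {i : ι} (hi : i ∈ s) (hfg : ∀ j ∈ s, j ≠ i → f j = g j) :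
    ∏ j ∈ s, f j - ∏ j ∈ s, g j = (f i - g i) * ∏ j ∈ s.erase i, f j := by
  rw [← mul_prod_erase s f hi, ← mul_prod_erase s g hi,
    prod_congr rfl fun j hj => hfg j (mem_of_mem_erase hj) (ne_of_mem_erase hj)]
  ring

section HybridModel

variable {X Z : Type*} {n : ℕ} {b : X → ℝ} {τ : (j : Fin n) → X → (Fin j.val → Z) → X → ℝ}
  {pZ qZ : X → Z → ℝ}

def hybridObs (pZ qZ : X → Z → ℝ) (k : ℕ) : ℕ → X → Z → ℝ :=
  fun j => if j < k then qZ else pZ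

def discrepancyObs (pZ qZ : X → Z → ℝ) (k : ℕ) : ℕ → X → Z → ℝ :=
  fun j => if j < k then qZ else if j = k then fun x z => |pZ x z - qZ x z| else pZ

lemma hybridObs_nonneg (hp0 : ∀ x z, 0 ≤ pZ x z) (hq0 : ∀ x z, 0 ≤ qZ x z) (k j : ℕ) (x : X)
    (z : Z) : 0 ≤ hybridObs pZ qZ k j x z := by
  unfold hybridObs; split_ifs
  exacts [hq0 x z, hp0 x z]

lemma discrepancyObs_nonneg (hp0 : ∀ x z, 0 ≤ pZ x z) (hq0 : ∀ x z, 0 ≤ qZ x z) (k j : ℕ)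
    (x : X) (z : Z) : 0 ≤ discrepancyObs pZ qZ k j x z := by
  unfold discrepancyObs; split_ifs
  exacts [hq0 x z, abs_nonneg _, hp0 x z]

lemma abs_pathWeight_hybridObs_sub (hb0 : ∀ x, 0 ≤ b x) (hτ0 : ∀ j x h x', 0 ≤ τ j x h x')
    (hp0 : ∀ x z, 0 ≤ pZ x z) (hq0 : ∀ x z, 0 ≤ qZ x z) {k m : ℕ} (hk : k < m) (hm : m ≤ n)
    (z : Fin m → Z) (x : Fin (m + 1) → X) :
    |pathWeight b τ (hybridObs pZ qZ k) m hm z x -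
        pathWeight b τ (hybridObs pZ qZ (k + 1)) m hm z x| =
      pathWeight b τ (discrepancyObs pZ qZ k) m hm z x := by
  classical
  set i : Fin m := ⟨k, hk⟩
  set P := ∏ j ∈ Finset.univ.erase i, hybridObs pZ qZ k j (x j.succ) (z j)
  have hP : 0 ≤ P := Finset.prod_nonneg fun j _ => hybridObs_nonneg hp0 hq0 _ _ _ _
  have hne : ∀ j : Fin m, j ≠ i → (j : ℕ) ≠ k := fun j hj h => hj (Fin.ext h)
  have hdiff : ∏ j : Fin m, hybridObs pZ qZ k j (x j.succ) (z j) -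
      ∏ j : Fin m, hybridObs pZ qZ (k + 1) j (x j.succ) (z j) =
        (pZ (x i.succ) (z i) - qZ (x i.succ) (z i)) * P := by
    rw [Finset.prod_sub_prod_eq_mul_prod_erase (Finset.mem_univ i) fun j _ hj => ?_]
    · congr 1
      simp [hybridObs, i]
    · have := hne j hj
      simp only [hybridObs]
      split_ifs <;> first | rfl | omega
  have hdisc : ∏ j : Fin m, discrepancyObs pZ qZ k j (x j.succ) (z j) =
      |pZ (x i.succ) (z i) - qZ (x i.succ) (z i)| * P := by
    rw [← Finset.mul_prod_erase _ _ (Finset.mem_univ i)]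
    congr 1
    · simp [discrepancyObs, i]
    · refine Finset.prod_congr rfl fun j hj => ?_
      have := hne j (Finset.ne_of_mem_erase hj)
      simp only [discrepancyObs, hybridObs]
      split_ifs <;> rfl
  have hC : 0 ≤ b (x 0) * ∏ j : Fin m,
      τ (j.castLE hm) (x j.castSucc) (fun k => z (k.castLE j.isLt.le)) (x j.succ) :=
    mul_nonneg (hb0 _) (Finset.prod_nonneg fun _ _ => hτ0 _ _ _ _)
  simp only [pathWeight]
  rw [← mul_sub, hdiff, hdisc, abs_mul (b (x 0) * _), abs_of_nonneg hC, abs_mul,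
    abs_of_nonneg hP]

-- `Dstep` is, by definition, the double integral of `prefixWeight * TVdisc (x (Fin.last _))`.
def prefixWeight (b : X → ℝ) (τ : (j : Fin n) → X → (Fin j.val → Z) → X → ℝ)
    (qZ : X → Z → ℝ) (m : ℕ) (hm : m + 1 ≤ n) (z : Fin m → Z) (x : Fin (m + 2) → X) : ℝ :=
  b (x 0) *
    (∏ j : Fin (m + 1),
      τ (j.castLE hm) (x j.castSucc)
        (fun k => z (k.castLE (Nat.lt_succ_iff.mp j.isLt))) (x j.succ)) *
    ∏ k : Fin m, qZ (x k.succ.castSucc) (z k)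

lemma prefixWeight_nonneg (hb0 : ∀ x, 0 ≤ b x) (hτ0 : ∀ j x h x', 0 ≤ τ j x h x')
    (hq0 : ∀ x z, 0 ≤ qZ x z) {m : ℕ} (hm : m + 1 ≤ n) (z : Fin m → Z) (x : Fin (m + 2) → X) :
    0 ≤ prefixWeight b τ qZ m hm z x :=
  mul_nonneg (mul_nonneg (hb0 _) (Finset.prod_nonneg fun _ _ => hτ0 _ _ _ _))
    (Finset.prod_nonneg fun _ _ => hq0 _ _)

lemma pathWeight_discrepancyObs_snoc {m : ℕ} (hm : m + 1 ≤ n) (z : Fin m → Z) (zl : Z)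
    (x : Fin (m + 2) → X) :
    pathWeight b τ (discrepancyObs pZ qZ m) (m + 1) hm (Fin.snoc z zl) x =
      prefixWeight b τ qZ m hm z x *
        |pZ (x (Fin.last (m + 1))) zl - qZ (x (Fin.last (m + 1))) zl| := by
  simp only [pathWeight, prefixWeight, Fin.prod_univ_castSucc (n := m), Fin.snoc_castSucc,
    Fin.snoc_last, Fin.succ_last, Fin.succ_castSucc, discrepancyObs, Fin.val_castSucc, Fin.is_lt,
    if_true, Fin.val_last, lt_irrefl, if_false]
  simp (disch := simp) only [Fin.snoc_castLE_of_le]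
  ring

end HybridModel

section Discrepancy

variable {X Z : Type*} [MeasurableSpace Z] {n : ℕ} {b : X → ℝ}
  {τ : (j : Fin n) → X → (Fin j.val → Z) → X → ℝ} {pZ qZ : X → Z → ℝ}

lemma integral_hybridObs {μZ : Measure Z} (hpn : ∀ x, ∫ z, pZ x z ∂μZ = 1)
    (hqn : ∀ x, ∫ z, qZ x z ∂μZ = 1) (k j : ℕ) (x : X) : ∫ z, hybridObs pZ qZ k j x z ∂μZ = 1 := by
  unfold hybridObs; split_ifs
  exacts [hqn x, hpn x]

lemma lintegral_abs_sub_eq_ofReal_TVdisc (μZ : Measure Z) (hpn : ∀ x, ∫ z, pZ x z ∂μZ = 1)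
    (hqn : ∀ x, ∫ z, qZ x z ∂μZ = 1) (x : X) :
    ∫⁻ z, ENNReal.ofReal |pZ x z - qZ x z| ∂μZ = ENNReal.ofReal (TVdisc μZ pZ qZ x) :=
  (ofReal_integral_eq_lintegral_ofReal
    ((integrable_of_integral_eq_one (hpn x)).sub (integrable_of_integral_eq_one (hqn x))).abs
    (ae_of_all _ fun _ => abs_nonneg _)).symm

variable [MeasurableSpace X]

lemma measurable_hybridObs (hp : Measurable (uncurry pZ)) (hq : Measurable (uncurry qZ))
    (k j : ℕ) : Measurable (uncurry (hybridObs pZ qZ k j)) := by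
  unfold hybridObs; split_ifs
  exacts [hq, hp]

lemma measurable_discrepancyObs (hp : Measurable (uncurry pZ)) (hq : Measurable (uncurry qZ))
    (k j : ℕ) : Measurable (uncurry (discrepancyObs pZ qZ k j)) := by
  unfold discrepancyObs; split_ifs
  exacts [hq, (hp.sub hq).abs, hp]

lemma measurable_prefixWeight (hb : Measurable b)
    (hτ : ∀ j, Measurable fun t : X × (Fin j.val → Z) × X => τ j t.1 t.2.1 t.2.2)
    (hq : Measurable (uncurry qZ)) {m : ℕ} (hm : m + 1 ≤ n) :
    Measurable fun y : (Fin m → Z) × (Fin (m + 2) → X) => prefixWeight b τ qZ m hm y.1 y.2 := by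
  refine Measurable.mul (Measurable.mul ?_ (Finset.measurable_prod _ fun j _ => ?_))
    (Finset.measurable_prod _ fun k _ => ?_)
  · exact hb.comp ((measurable_pi_apply 0).comp measurable_snd)
  · exact (hτ (j.castLE hm)).comp (f := fun y : (Fin m → Z) × (Fin (m + 2) → X) =>
      (y.2 j.castSucc, fun k : Fin j => y.1 (k.castLE (Nat.lt_succ_iff.mp j.isLt)), y.2 j.succ))
      (by fun_prop)
  · exact hq.comp (f := fun y : (Fin m → Z) × (Fin (m + 2) → X) => (y.2 k.succ.castSucc, y.1 k))
      (by fun_prop)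

variable (μX : Measure X) (μZ : Measure Z)

lemma measurable_TVdisc [SFinite μZ] (hp : Measurable (uncurry pZ))
    (hq : Measurable (uncurry qZ)) : Measurable (TVdisc μZ pZ qZ) :=
  ((hp.sub hq).abs.stronglyMeasurable.integral_prod_right (ν := μZ)).measurable

variable [SigmaFinite μX] [SigmaFinite μZ]

lemma pathMass_discrepancyObs_succ (hb : Measurable b) (hb0 : ∀ x, 0 ≤ b x)
    (hτ : ∀ j, Measurable fun t : X × (Fin j.val → Z) × X => τ j t.1 t.2.1 t.2.2)
    (hτ0 : ∀ j x h x', 0 ≤ τ j x h x')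
    (hp : Measurable (uncurry pZ)) (hq : Measurable (uncurry qZ)) (hq0 : ∀ x z, 0 ≤ qZ x z)
    (hpn : ∀ x, ∫ z, pZ x z ∂μZ = 1) (hqn : ∀ x, ∫ z, qZ x z ∂μZ = 1) {m : ℕ} (hm : m + 1 ≤ n) :
    pathMass μX μZ b τ (discrepancyObs pZ qZ m) (m + 1) hm =
      ∫⁻ z, ∫⁻ x, ENNReal.ofReal
          (prefixWeight b τ qZ m hm z x * TVdisc μZ pZ qZ (x (Fin.last (m + 1))))
        ∂(Measure.pi fun _ => μX) ∂(Measure.pi fun _ => μZ) := by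
  have hF := (measurable_pathWeight hb hτ (measurable_discrepancyObs hp hq m) _ hm).ennreal_ofReal
  rw [pathMass, lintegral_pi_fin_succ μZ hF.lintegral_prod_right']
  refine lintegral_congr fun z => ?_
  have hG := hF.comp (f := fun q : Z × (Fin (m + 2) → X) => (Fin.snoc z q.1, q.2)) (by fun_prop)
  dsimp only
  rw [lintegral_lintegral_swap (f := fun zl x => ENNReal.ofReal
    (pathWeight b τ (discrepancyObs pZ qZ m) (m + 1) hm (Fin.snoc z zl) x)) hG.aemeasurable]
  refine lintegral_congr fun x => ?_
  have hP := prefixWeight_nonneg hb0 hτ0 hq0 hm z x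
  simp only [pathWeight_discrepancyObs_snoc, ENNReal.ofReal_mul hP,
    lintegral_const_mul' _ _ ENNReal.ofReal_ne_top, lintegral_abs_sub_eq_ofReal_TVdisc μZ hpn hqn]

lemma Dstep_eq_toReal_pathMass (hb : Measurable b) (hb0 : ∀ x, 0 ≤ b x)
    (hτ : ∀ j, Measurable fun t : X × (Fin j.val → Z) × X => τ j t.1 t.2.1 t.2.2)
    (hτ0 : ∀ j x h x', 0 ≤ τ j x h x') (hτn : ∀ j x h, ∫ x', τ j x h x' ∂μX = 1)
    (hp : Measurable (uncurry pZ)) (hq : Measurable (uncurry qZ))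
    (hp0 : ∀ x z, 0 ≤ pZ x z) (hq0 : ∀ x z, 0 ≤ qZ x z)
    (hpn : ∀ x, ∫ z, pZ x z ∂μZ = 1) (hqn : ∀ x, ∫ z, qZ x z ∂μZ = 1) (l : Fin n)
    (hfin : pathMass μX μZ b τ (discrepancyObs pZ qZ l) n le_rfl ≠ ⊤) :
    Dstep μX μZ b τ pZ qZ l = (pathMass μX μZ b τ (discrepancyObs pZ qZ l) n le_rfl).toReal := by
  have htail : pathMass μX μZ b τ (discrepancyObs pZ qZ l) n le_rfl =
      pathMass μX μZ b τ (discrepancyObs pZ qZ l) (l + 1) l.isLt :=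
    pathMass_eq_of_le μX μZ hb hb0 hτ hτ0 hτn (measurable_discrepancyObs hp hq l)
      (discrepancyObs_nonneg hp0 hq0 l) l.isLt le_rfl fun j hlj _ x => by
        rw [discrepancyObs, if_neg (by omega), if_neg (by omega), hpn]
  rw [htail, pathMass_discrepancyObs_succ μX μZ hb hb0 hτ hτ0 hp hq hq0 hpn hqn] at hfin ⊢
  exact integral_integral_eq_toReal_lintegral_lintegral
    ((measurable_prefixWeight hb hτ hq l.isLt).mul
      ((measurable_TVdisc μZ hp hq).comp (by fun_prop)))
    (fun z x => mul_nonneg (prefixWeight_nonneg hb0 hτ0 hq0 _ z x)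
      (integral_nonneg fun _ => abs_nonneg _)) hfin

end Discrepancy

section Expectation

variable {X Z : Type*} [MeasurableSpace X] [MeasurableSpace Z] {n : ℕ} {b : X → ℝ}
  {τ : (j : Fin n) → X → (Fin j.val → Z) → X → ℝ} {pZ qZ : X → Z → ℝ}
  (μX : Measure X) (μZ : Measure Z) [SigmaFinite μX]

lemma measurable_terminalReward {r : X → (Fin n → Z) → ℝ}
    (hr : Measurable fun t : X × (Fin n → Z) => r t.1 t.2) :
    Measurable fun y : (Fin n → Z) × (Fin (n + 1) → X) => r (y.2 (Fin.last n)) y.1 :=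
  hr.comp (f := fun y : (Fin n → Z) × (Fin (n + 1) → X) => (y.2 (Fin.last n), y.1)) (by fun_prop)

lemma integrable_pathWeight_iff {w : ℕ → X → Z → ℝ} (hb : Measurable b) (hb0 : ∀ x, 0 ≤ b x)
    (hτ : ∀ j, Measurable fun t : X × (Fin j.val → Z) × X => τ j t.1 t.2.1 t.2.2)
    (hτ0 : ∀ j x h x', 0 ≤ τ j x h x')
    (hw : ∀ j, Measurable (uncurry (w j))) (hw0 : ∀ j x z, 0 ≤ w j x z) {m : ℕ} (hm : m ≤ n) :
    Integrable (fun y => pathWeight b τ w m hm y.1 y.2)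
        ((Measure.pi fun _ => μZ).prod (Measure.pi fun _ => μX)) ↔
      pathMass μX μZ b τ w m hm ≠ ⊤ :=
  integrable_prod_iff_lintegral_lintegral_ne_top (measurable_pathWeight hb hτ hw m hm)
    (pathWeight_nonneg hb0 hτ0 hw0 m hm)

variable [SigmaFinite μZ]

lemma integrable_pathWeight_hybridObs (hb : Measurable b) (hb0 : ∀ x, 0 ≤ b x)
    (hbn : ∫ x, b x ∂μX = 1)
    (hτ : ∀ j, Measurable fun t : X × (Fin j.val → Z) × X => τ j t.1 t.2.1 t.2.2)
    (hτ0 : ∀ j x h x', 0 ≤ τ j x h x') (hτn : ∀ j x h, ∫ x', τ j x h x' ∂μX = 1)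
    (hp : Measurable (uncurry pZ)) (hq : Measurable (uncurry qZ))
    (hp0 : ∀ x z, 0 ≤ pZ x z) (hq0 : ∀ x z, 0 ≤ qZ x z)
    (hpn : ∀ x, ∫ z, pZ x z ∂μZ = 1) (hqn : ∀ x, ∫ z, qZ x z ∂μZ = 1) (k : ℕ) :
    Integrable (fun y => pathWeight b τ (hybridObs pZ qZ k) n le_rfl y.1 y.2)
      ((Measure.pi fun _ => μZ).prod (Measure.pi fun _ => μX)) := by
  rw [integrable_pathWeight_iff μX μZ hb hb0 hτ hτ0 (measurable_hybridObs hp hq k)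
    (hybridObs_nonneg hp0 hq0 k), pathMass_eq_one μX μZ hb hb0 hbn hτ hτ0 hτn
    (measurable_hybridObs hp hq k) (hybridObs_nonneg hp0 hq0 k) (integral_hybridObs hpn hqn k)]
  exact ENNReal.one_ne_top

lemma Eexp_eq_integral_pathWeight_mul {ρ : X → Z → ℝ} {w : ℕ → X → Z → ℝ}
    (hwρ : ∀ j < n, w j = ρ) {r : X → (Fin n → Z) → ℝ}
    (hr : Measurable fun t : X × (Fin n → Z) => r t.1 t.2) {R : ℝ} (hrR : ∀ x z, |r x z| ≤ R)
    (hW : Integrable (fun y => pathWeight b τ w n le_rfl y.1 y.2)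
      ((Measure.pi fun _ => μZ).prod (Measure.pi fun _ => μX))) :
    Eexp μX μZ b τ ρ n le_rfl r = ∫ y, pathWeight b τ w n le_rfl y.1 y.2 * r (y.2 (Fin.last n)) y.1
      ∂(Measure.pi fun _ => μZ).prod (Measure.pi fun _ => μX) := by
  rw [pathWeight_congr le_rfl hwρ] at hW ⊢
  exact integral_integral (hW.mul_bdd (measurable_terminalReward hr).aestronglyMeasurable
    (ae_of_all _ fun y => hrR _ _))

lemma abs_integral_hybridObs_sub_le (hb : Measurable b) (hb0 : ∀ x, 0 ≤ b x)
    (hbn : ∫ x, b x ∂μX = 1)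
    (hτ : ∀ j, Measurable fun t : X × (Fin j.val → Z) × X => τ j t.1 t.2.1 t.2.2)
    (hτ0 : ∀ j x h x', 0 ≤ τ j x h x') (hτn : ∀ j x h, ∫ x', τ j x h x' ∂μX = 1)
    (hp : Measurable (uncurry pZ)) (hq : Measurable (uncurry qZ))
    (hp0 : ∀ x z, 0 ≤ pZ x z) (hq0 : ∀ x z, 0 ≤ qZ x z)
    (hpn : ∀ x, ∫ z, pZ x z ∂μZ = 1) (hqn : ∀ x, ∫ z, qZ x z ∂μZ = 1)
    {r : X → (Fin n → Z) → ℝ} (hr : Measurable fun t : X × (Fin n → Z) => r t.1 t.2) {R : ℝ}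
    (hrR : ∀ x z, |r x z| ≤ R) (l : Fin n) :
    |∫ y, pathWeight b τ (hybridObs pZ qZ l) n le_rfl y.1 y.2 * r (y.2 (Fin.last n)) y.1
        ∂(Measure.pi fun _ => μZ).prod (Measure.pi fun _ => μX) -
      ∫ y, pathWeight b τ (hybridObs pZ qZ (l + 1)) n le_rfl y.1 y.2 * r (y.2 (Fin.last n)) y.1
        ∂(Measure.pi fun _ => μZ).prod (Measure.pi fun _ => μX)| ≤
      R * Dstep μX μZ b τ pZ qZ l := by
  have hW := integrable_pathWeight_hybridObs μX μZ hb hb0 hbn hτ hτ0 hτn hp hq hp0 hq0 hpn hqn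
  have hdisc : (fun y : (Fin n → Z) × (Fin (n + 1) → X) =>
      |pathWeight b τ (hybridObs pZ qZ l) n le_rfl y.1 y.2 -
        pathWeight b τ (hybridObs pZ qZ (l + 1)) n le_rfl y.1 y.2|) =
      fun y => pathWeight b τ (discrepancyObs pZ qZ l) n le_rfl y.1 y.2 :=
    funext fun y => abs_pathWeight_hybridObs_sub hb0 hτ0 hp0 hq0 l.isLt le_rfl y.1 y.2
  have hfin : pathMass μX μZ b τ (discrepancyObs pZ qZ l) n le_rfl ≠ ⊤ :=
    (integrable_pathWeight_iff μX μZ hb hb0 hτ hτ0 (measurable_discrepancyObs hp hq l)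
      (discrepancyObs_nonneg hp0 hq0 l) le_rfl).1 (hdisc ▸ ((hW l).sub (hW (l + 1))).abs)
  refine (abs_integral_mul_sub_integral_mul_le (hW l) (hW (l + 1))
    (measurable_terminalReward hr).aestronglyMeasurable fun y => hrR _ _).trans_eq ?_
  rw [hdisc, integral_prod_eq_toReal_lintegral_lintegral
      (measurable_pathWeight hb hτ (measurable_discrepancyObs hp hq l) n le_rfl)
      (pathWeight_nonneg hb0 hτ0 (discrepancyObs_nonneg hp0 hq0 l) n le_rfl),
    Dstep_eq_toReal_pathMass μX μZ hb hb0 hτ hτ0 hτn hp hq hp0 hq0 hpn hqn l hfin]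
  rfl

end Expectation

theorem expected_reward_diff_le_sum_discrepancy_general
    {X Z : Type*} [MeasurableSpace X] [MeasurableSpace Z]
    (μX : Measure X) (μZ : Measure Z) [SigmaFinite μX] [SigmaFinite μZ]
    (n : ℕ)
    (b : X → ℝ) (hb_meas : Measurable b) (hb_nonneg : ∀ x, 0 ≤ b x)
    (hb_norm : ∫ x, b x ∂μX = 1)
    (τ : (j : Fin n) → X → (Fin j.val → Z) → X → ℝ)
    (hτ_meas : ∀ j, Measurable fun t : X × (Fin j.val → Z) × X => τ j t.1 t.2.1 t.2.2)
    (hτ_nonneg : ∀ j x h x', 0 ≤ τ j x h x')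
    (hτ_norm : ∀ j x h, ∫ x', τ j x h x' ∂μX = 1)
    (pZ qZ : X → Z → ℝ)
    (hp_meas : Measurable (Function.uncurry pZ))
    (hq_meas : Measurable (Function.uncurry qZ))
    (hp_nonneg : ∀ x z, 0 ≤ pZ x z) (hq_nonneg : ∀ x z, 0 ≤ qZ x z)
    (hp_norm : ∀ x, ∫ z, pZ x z ∂μZ = 1) (hq_norm : ∀ x, ∫ z, qZ x z ∂μZ = 1)
    (r : X → (Fin n → Z) → ℝ)
    (hr_meas : Measurable fun t : X × (Fin n → Z) => r t.1 t.2)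
    (R : ℝ) (hr_bdd : ∀ x z, |r x z| ≤ R) :
    |Eexp μX μZ b τ pZ n le_rfl r - Eexp μX μZ b τ qZ n le_rfl r|
      ≤ R * ∑ l : Fin n, Dstep μX μZ b τ pZ qZ l := by
  set E : ℕ → ℝ := fun k =>
    ∫ y, pathWeight b τ (hybridObs pZ qZ k) n le_rfl y.1 y.2 * r (y.2 (Fin.last n)) y.1
      ∂(Measure.pi fun _ => μZ).prod (Measure.pi fun _ => μX)
  have hW := integrable_pathWeight_hybridObs μX μZ hb_meas hb_nonneg hb_norm hτ_meas hτ_nonneg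
    hτ_norm hp_meas hq_meas hp_nonneg hq_nonneg hp_norm hq_norm
  have hE_p : Eexp μX μZ b τ pZ n le_rfl r = E 0 :=
    Eexp_eq_integral_pathWeight_mul μX μZ (fun j _ => if_neg j.not_lt_zero) hr_meas hr_bdd (hW 0)
  have hE_q : Eexp μX μZ b τ qZ n le_rfl r = E n :=
    Eexp_eq_integral_pathWeight_mul μX μZ (fun _ hj => if_pos hj) hr_meas hr_bdd (hW n)
  rw [hE_p, hE_q, ← Finset.sum_range_sub', ← Fin.sum_univ_eq_sum_range (fun k => E k - E (k + 1)),
    Finset.mul_sum]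
  exact (Finset.abs_sum_le_sum_abs _ _).trans (Finset.sum_le_sum fun l _ =>
    abs_integral_hybridObs_sub_le μX μZ hb_meas hb_nonneg hb_norm hτ_meas hτ_nonneg hτ_norm
      hp_meas hq_meas hp_nonneg hq_nonneg hp_norm hq_norm hr_meas hr_bdd l)

/-- Theorem 1 of the paper: the difference between the expected terminal reward
under the original and simplified observation models is bounded by the maximal
reward times the sum of the expected stepwise discrepancies under the
simplified model. -/
theorem expected_reward_diff_le_sum_discrepancy
    {X Z : Type*} [MeasurableSpace X] [MeasurableSpace Z]
    (μX : Measure X) (μZ : Measure Z) [SigmaFinite μX] [SigmaFinite μZ]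
    (n : ℕ)
    (b : X → ℝ) (hb_meas : Measurable b) (hb_nonneg : ∀ x, 0 ≤ b x)
    (hb_norm : ∫ x, b x ∂μX = 1)
    (τ : (j : Fin n) → X → (Fin j.val → Z) → X → ℝ)
    (hτ_meas : ∀ j, Measurable fun t : X × (Fin j.val → Z) × X => τ j t.1 t.2.1 t.2.2)
    (hτ_nonneg : ∀ j x h x', 0 ≤ τ j x h x')
    (hτ_norm : ∀ j x h, ∫ x', τ j x h x' ∂μX = 1)
    (pZ qZ : X → Z → ℝ)
    (hp_meas : Measurable (Function.uncurry pZ))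
    (hq_meas : Measurable (Function.uncurry qZ))
    (hp_nonneg : ∀ x z, 0 ≤ pZ x z) (hq_nonneg : ∀ x z, 0 ≤ qZ x z)
    (hp_norm : ∀ x, ∫ z, pZ x z ∂μZ = 1) (hq_norm : ∀ x, ∫ z, qZ x z ∂μZ = 1)
    (r : X → (Fin n → Z) → ℝ)
    (hr_meas : Measurable fun t : X × (Fin n → Z) => r t.1 t.2)
    (R : ℝ) (hR : 0 ≤ R) (hr_bdd : ∀ x z, |r x z| ≤ R) :
    |Eexp μX μZ b τ pZ n le_rfl r - Eexp μX μZ b τ qZ n le_rfl r|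
      ≤ R * ∑ l : Fin n, Dstep μX μZ b τ pZ qZ l :=
  expected_reward_diff_le_sum_discrepancy_general μX μZ n b hb_meas hb_nonneg hb_norm τ hτ_meas
    hτ_nonneg hτ_norm pZ qZ hp_meas hq_meas hp_nonneg hq_nonneg hp_norm hq_norm r hr_meas R hr_bdd
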